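/- arXiv:2105.14187 — 6 statements merged into one kernel-verified Lean document; each statement's English description precedes it below -/
import Mathlib

section
/- Let μ be a probability measure on ℝ, let ε ∈ (0,1), δ ∈ (0,1), and let integers r ≥ 1 and N ≥ r satisfy B(r−1; N, ε) ≤ δ. If q₁, …, q_N are drawn i.i.d. from μ (i.e., according to the N-fold product measure μ^N on ℝ^N), then with probability no smaller than 1−δ over the multisample, the r-th largest value q_r⁺ = rmax_r{q_i}_{i=1}^N satisfies μ{ q ∈ ℝ : q > q_r⁺ } ≤ ε. -/
open MeasureTheory

/-- Binomial cumulative distribution function `B(k; N, ε)`,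
with the convention that it is `0` for `k < 0`. -/
noncomputable def binomCdf (k : ℤ) (N : ℕ) (ε : ℝ) : ℝ :=
  ∑ i ∈ Finset.range (N + 1),
    if (i : ℤ) ≤ k then (N.choose i : ℝ) * ε ^ i * (1 - ε) ^ (N - i) else 0

/-- The `r`-th largest value of the collection `{q i}_{i=1}^N`
(the element at position `r` in decreasing order, counted with multiplicity). -/
noncomputable def rmax {N : ℕ} (r : ℕ) (q : Fin N → ℝ) : ℝ :=
  ((List.ofFn q).insertionSort (· ≤ ·)).getD (N - r) 0

/-!
Let `t` be an upper `ε`-quantile of `μ`: `μ (t, ∞) ≤ ε ≤ μ [t, ∞)`. If at least `r` sample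
points lie in `[t, ∞)` then the `r`-th largest one is `≥ t`, so `μ {q > q_r⁺} ≤ μ (t, ∞) ≤ ε`.
Hence the bad event forces fewer than `r` of the `N` independent points into `[t, ∞)`, which
has probability `B(r - 1; N, p)` with `p = μ [t, ∞) ≥ ε`; and `B(r - 1; N, ·)` is decreasing on
`[0, 1]` (its derivative is `-N` times a Bernstein polynomial), so this is at most
`B(r - 1; N, ε) ≤ δ`.
-/

open Finset ProbabilityTheory Polynomial

theorem List.Pairwise.le_getD_of_le_countP {α : Type*} [LinearOrder α] {l : List α}
    (hl : l.Pairwise (· ≤ ·)) (t d : α) {r : ℕ} (hr : 0 < r)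
    (hc : r ≤ l.countP (t ≤ ·)) : t ≤ l.getD (l.length - r) d := by
  have hm : l.length - r < l.length := by
    have := hc.trans List.countP_le_length
    omega
  rw [List.getD_eq_getElem l d hm]
  by_contra! hlt
  have htake : (l.take (l.length - r + 1)).countP (t ≤ ·) = 0 := by
    rw [List.countP_eq_zero]
    intro x hx
    obtain ⟨j, hj, rfl⟩ := List.getElem_of_mem hx
    simp only [List.getElem_take, decide_eq_true_eq, not_le]
    simp only [List.length_take] at hj
    refine lt_of_le_of_lt ?_ hlt
    rcases (show j < l.length - r ∨ j = l.length - r by omega) with h | h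
    · exact List.pairwise_iff_getElem.mp hl _ _ _ _ h
    · simp [h]
  have hsplit := List.countP_append (l₁ := l.take (l.length - r + 1))
    (l₂ := l.drop (l.length - r + 1)) (p := (t ≤ ·))
  rw [List.take_append_drop, htake] at hsplit
  have hdrop := List.countP_le_length (l := l.drop (l.length - r + 1)) (p := (t ≤ ·))
  rw [List.length_drop] at hdrop
  omega

theorem List.countP_ofFn {α : Type*} {N : ℕ} (q : Fin N → α) (p : α → Prop) [DecidablePred p] :
    (List.ofFn q).countP p = #{i | p (q i)} := by
  rw [← Multiset.coe_countP, ← Fin.univ_val_map, Multiset.countP_map]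
  rfl

theorem le_rmax_of_le_card {N r : ℕ} (q : Fin N → ℝ) (t : ℝ) (hr : 0 < r)
    (hcard : r ≤ #{i | t ≤ q i}) : t ≤ rmax r q := by
  have hsorted := List.pairwise_insertionSort (· ≤ ·) (List.ofFn q)
  have hperm := List.perm_insertionSort (· ≤ ·) (List.ofFn q)
  have h := hsorted.le_getD_of_le_countP t 0 hr (by rwa [hperm.countP_eq, List.countP_ofFn])
  rwa [List.length_insertionSort, List.length_ofFn] at h

theorem bernsteinPolynomial_eval (N ν : ℕ) (x : ℝ) :
    (bernsteinPolynomial ℝ N ν).eval x = N.choose ν * x ^ ν * (1 - x) ^ (N - ν) := by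
  simp [bernsteinPolynomial]

theorem bernsteinPolynomial_eval_nonneg (N ν : ℕ) {x : ℝ} (hx : x ∈ Set.Icc (0 : ℝ) 1) :
    0 ≤ (bernsteinPolynomial ℝ N ν).eval x := by
  have := hx.1
  have := sub_nonneg.mpr hx.2
  rw [bernsteinPolynomial_eval]
  positivity

theorem derivative_sum_range_bernsteinPolynomial (N r : ℕ) :
    derivative (∑ ν ∈ range (r + 1), bernsteinPolynomial ℝ N ν) =
      -N * bernsteinPolynomial ℝ (N - 1) r := by
  induction r with
  | zero => simp [bernsteinPolynomial.derivative_zero]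
  | succ r ih =>
    rw [sum_range_succ, derivative_add, ih, bernsteinPolynomial.derivative_succ]
    ring

theorem antitoneOn_eval_sum_range_bernsteinPolynomial (N r : ℕ) :
    AntitoneOn (fun x => (∑ ν ∈ range r, bernsteinPolynomial ℝ N ν).eval x) (Set.Icc 0 1) := by
  cases r with
  | zero => simp [AntitoneOn]
  | succ r =>
    refine antitoneOn_of_deriv_nonpos (convex_Icc 0 1) (Polynomial.continuousOn _)
      (Polynomial.differentiableOn _) fun x hx => ?_
    rw [interior_Icc] at hx
    rw [Polynomial.deriv, derivative_sum_range_bernsteinPolynomial, eval_mul]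
    simp only [eval_neg, eval_natCast, neg_mul, neg_nonpos]
    exact mul_nonneg N.cast_nonneg
      (bernsteinPolynomial_eval_nonneg _ _ (Set.Ioo_subset_Icc_self hx))

theorem binomCdf_eq_eval_sum_bernsteinPolynomial (k : ℤ) (N : ℕ) (p : ℝ) :
    binomCdf k N p = (∑ ν ∈ range (k + 1).toNat, bernsteinPolynomial ℝ N ν).eval p := by
  simp only [binomCdf, ← sum_filter, eval_finsetSum, bernsteinPolynomial_eval]
  apply sum_subset
  · intro i hi
    simp only [mem_filter, mem_range] at hi ⊢
    omega
  · intro i hi hi'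
    simp only [mem_filter, mem_range] at hi hi'
    rw [Nat.choose_eq_zero_of_lt (by omega), Nat.cast_zero, zero_mul, zero_mul]

theorem binomCdf_antitoneOn (k : ℤ) (N : ℕ) : AntitoneOn (binomCdf k N) (Set.Icc 0 1) := by
  simpa only [funext (binomCdf_eq_eval_sum_bernsteinPolynomial k N)] using
    antitoneOn_eval_sum_range_bernsteinPolynomial N (k + 1).toNat

theorem measure_pi_ite_mem {α : Type*} [MeasurableSpace α] (μ : Measure α) [SigmaFinite μ]
    {N : ℕ} (S : Set α) (T : Finset (Fin N)) :
    Measure.pi (fun _ : Fin N => μ) (Set.univ.pi fun i => if i ∈ T then S else Sᶜ) =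
      μ S ^ #T * μ Sᶜ ^ (N - #T) := by
  simp [Measure.pi_pi, apply_ite μ, prod_ite, filter_not, card_univ_sdiff]

theorem measure_pi_card_lt_le {α : Type*} [MeasurableSpace α] (μ : Measure α) [SigmaFinite μ]
    (S : Set α) [DecidablePred (· ∈ S)] (N r : ℕ) :
    Measure.pi (fun _ : Fin N => μ) {q | #{i | q i ∈ S} < r} ≤
      ∑ k ∈ range r, N.choose k * μ S ^ k * μ Sᶜ ^ (N - k) := by
  have hcover : {q : Fin N → α | #{i | q i ∈ S} < r} ⊆
      ⋃ k ∈ range r, ⋃ T ∈ powersetCard k univ,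
        Set.univ.pi fun i => if i ∈ T then S else Sᶜ := by
    intro q hq
    simp only [Set.mem_iUnion, Set.mem_univ_pi, mem_range, mem_powersetCard]
    refine ⟨_, hq, ({i | q i ∈ S} : Finset _), ⟨subset_univ _, rfl⟩, fun i => ?_⟩
    by_cases hi : q i ∈ S <;> simp [hi]
  refine (measure_mono hcover).trans <| (measure_biUnion_finset_le _ _).trans <|
    sum_le_sum fun k _ => (measure_biUnion_finset_le _ _).trans_eq ?_
  rw [sum_congr rfl fun T hT => by rw [measure_pi_ite_mem, (mem_powersetCard.mp hT).2],
    sum_const, card_powersetCard, card_univ, Fintype.card_fin, nsmul_eq_mul, mul_assoc]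

theorem measure_pi_card_lt_le_binomCdf {α : Type*} [MeasurableSpace α] (μ : Measure α)
    [IsProbabilityMeasure μ] {S : Set α} (hS : MeasurableSet S) [DecidablePred (· ∈ S)]
    (N r : ℕ) :
    Measure.pi (fun _ : Fin N => μ) {q | #{i | q i ∈ S} < r} ≤
      ENNReal.ofReal (binomCdf (r - 1) N (μ.real S)) := by
  refine (measure_pi_card_lt_le μ S N r).trans_eq ?_
  have hp : μ.real S ∈ Set.Icc (0 : ℝ) 1 := ⟨measureReal_nonneg, measureReal_le_one⟩
  rw [binomCdf_eq_eval_sum_bernsteinPolynomial, sub_add_cancel, Int.toNat_natCast,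
    eval_finsetSum, ENNReal.ofReal_sum_of_nonneg fun ν _ => bernsteinPolynomial_eval_nonneg N ν hp]
  refine sum_congr rfl fun k _ => ?_
  rw [bernsteinPolynomial_eval, ← probReal_compl_eq_one_sub hS,
    ENNReal.ofReal_mul (by positivity), ENNReal.ofReal_mul (by positivity),
    ENNReal.ofReal_pow measureReal_nonneg, ENNReal.ofReal_pow measureReal_nonneg,
    ENNReal.ofReal_natCast, ofReal_measureReal, ofReal_measureReal]

theorem exists_measure_Ioi_le_le_measure_Ici (μ : Measure ℝ) [IsProbabilityMeasure μ] {ε : ℝ}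
    (h0 : 0 < ε) (h1 : ε < 1) :
    ∃ t, μ (Set.Ioi t) ≤ ENNReal.ofReal ε ∧ ENNReal.ofReal ε ≤ μ (Set.Ici t) := by
  set F := cdf μ
  set A := {x | 1 - ε ≤ F x}
  have hne : A.Nonempty :=
    ((tendsto_cdf_atTop μ).eventually (eventually_ge_nhds (by linarith))).exists
  have hbdd : BddBelow A := by
    obtain ⟨b, hb⟩ := ((tendsto_cdf_atBot μ).eventually
      (eventually_lt_nhds (by linarith : (0 : ℝ) < 1 - ε))).exists_forall_of_atBot
    refine ⟨b, fun x hx => ?_⟩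
    by_contra! hxb
    exact (hb x hxb.le).not_ge hx
  refine ⟨sInf A, ?_, ?_⟩
  · have hF : 1 - ε ≤ F (sInf A) := by
      refine ge_of_tendsto ((F.right_continuous _).mono Set.Ioi_subset_Ici_self) ?_
      filter_upwards [self_mem_nhdsWithin] with x hx
      obtain ⟨a, ha, hax⟩ := (csInf_lt_iff hbdd hne).mp hx
      exact ha.trans (F.mono hax.le)
    rw [← measure_cdf μ, F.measure_Ioi (tendsto_cdf_atTop μ)]
    exact ENNReal.ofReal_le_ofReal (by linarith)
  · have hF : Function.leftLim F (sInf A) ≤ 1 - ε := by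
      refine le_of_tendsto (F.mono.tendsto_leftLim _) ?_
      filter_upwards [self_mem_nhdsWithin] with x hx
      by_contra! h
      exact hx.not_ge (csInf_le hbdd h.le)
    rw [← measure_cdf μ, F.measure_Ici (tendsto_cdf_atTop μ)]
    exact ENNReal.ofReal_le_ofReal (by linarith)

theorem ofReal_one_sub_le_of_measure_compl_le {Ω : Type*} [MeasurableSpace Ω] {ν : Measure Ω}
    [IsProbabilityMeasure ν] {s : Set Ω} {δ : ℝ} (hδ : 0 ≤ δ) (h : ν sᶜ ≤ ENNReal.ofReal δ) :
    ENNReal.ofReal (1 - δ) ≤ ν s :=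
  calc ENNReal.ofReal (1 - δ) = 1 - ENNReal.ofReal δ := by
        rw [ENNReal.ofReal_sub _ hδ, ENNReal.ofReal_one]
    _ ≤ 1 - ν sᶜ := tsub_le_tsub_left h 1
    _ ≤ ν s := tsub_le_iff_right.mpr (measure_univ (μ := ν) ▸ measure_univ_le_add_compl s)

theorem stmt0_general (μ : Measure ℝ) [IsProbabilityMeasure μ]
    (ε δ : ℝ) (hε : ε ∈ Set.Ioo (0 : ℝ) 1) (hδ : δ ∈ Set.Ioo (0 : ℝ) 1)
    (r N : ℕ) (hr : 1 ≤ r)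
    (hB : binomCdf ((r : ℤ) - 1) N ε ≤ δ) :
    ENNReal.ofReal (1 - δ) ≤
      (Measure.pi fun _ : Fin N => μ)
        {q : Fin N → ℝ | μ {x : ℝ | rmax r q < x} ≤ ENNReal.ofReal ε} := by
  obtain ⟨t, hIoi, hIci⟩ := exists_measure_Ioi_le_le_measure_Ici μ hε.1 hε.2
  have hεp : ε ≤ μ.real (Set.Ici t) := by
    rw [← ENNReal.ofReal_le_ofReal_iff measureReal_nonneg, ofReal_measureReal]
    exact hIci
  have hbad : {q : Fin N → ℝ | μ {x : ℝ | rmax r q < x} ≤ ENNReal.ofReal ε}ᶜ ⊆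
      {q | #{i | q i ∈ Set.Ici t} < r} := by
    intro q hq
    simp only [Set.mem_ofPred_eq, Set.mem_Ici]
    by_contra! hcard
    exact hq ((measure_mono fun x hx =>
      (le_rmax_of_le_card q t hr hcard).trans_lt hx).trans hIoi)
  refine ofReal_one_sub_le_of_measure_compl_le hδ.1.le ?_
  calc _ ≤ _ := measure_mono hbad
    _ ≤ ENNReal.ofReal (binomCdf (r - 1) N (μ.real (Set.Ici t))) :=
        measure_pi_card_lt_le_binomCdf μ measurableSet_Ici N r
    _ ≤ ENNReal.ofReal δ := ENNReal.ofReal_le_ofReal <|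
        (binomCdf_antitoneOn _ N ⟨hε.1.le, hε.2.le⟩
          ⟨measureReal_nonneg, measureReal_le_one⟩ hεp).trans hB

theorem stmt0 (μ : Measure ℝ) [IsProbabilityMeasure μ]
    (ε δ : ℝ) (hε : ε ∈ Set.Ioo (0 : ℝ) 1) (hδ : δ ∈ Set.Ioo (0 : ℝ) 1)
    (r N : ℕ) (hr : 1 ≤ r) (hrN : r ≤ N)
    (hB : binomCdf ((r : ℤ) - 1) N ε ≤ δ) :
    ENNReal.ofReal (1 - δ) ≤
      (Measure.pi fun _ : Fin N => μ)
        {q : Fin N → ℝ | μ {x : ℝ | rmax r q < x} ≤ ENNReal.ofReal ε} :=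
  stmt0_general μ ε δ hε hδ r N hr hB
end

section
/- (Lemma 1) Given ε ∈ (0,1) and δ ∈ (0,1), suppose the integer N satisfies N ≥ (7.47/ε) · ln(1/δ), and let r = ⌊εN/2⌋. Then B(r−1; N, ε) ≤ δ. -/
theorem stmt2 (ε δ : ℝ) (hε : ε ∈ Set.Ioo (0 : ℝ) 1) (hδ : δ ∈ Set.Ioo (0 : ℝ) 1)
    (N : ℕ) (hN : 7.47 / ε * Real.log (1 / δ) ≤ (N : ℝ)) :
    binomCdf (⌊ε * (N : ℝ) / 2⌋ - 1) N ε ≤ δ := by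
  obtain ⟨hε0, hε1⟩ := hε
  obtain ⟨hδ0, hδ1⟩ := hδ
  set k : ℤ := ⌊ε * (N : ℝ) / 2⌋ - 1 with hk
  by_cases hkneg : k < 0
  · have h0 : binomCdf k N ε = 0 := by
      unfold binomCdf
      apply Finset.sum_eq_zero
      intro i _
      rw [if_neg]
      omega
    rw [h0]; exact le_of_lt hδ0
  · push_neg at hkneg
    set m : ℕ := k.toNat with hm
    have hmk : (m : ℤ) = k := Int.toNat_of_nonneg hkneg
    have hNnn : (0:ℝ) ≤ ε * N / 2 := by positivity
    have hmle : (m : ℝ) ≤ ε * N / 2 := by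
      have h1 : ((m : ℤ) : ℝ) = (k : ℝ) := by exact_mod_cast hmk
      have h2 : ((⌊ε * (N : ℝ) / 2⌋ : ℤ) : ℝ) ≤ ε * N / 2 := Int.floor_le _
      have : (k : ℝ) = ((⌊ε * (N : ℝ) / 2⌋ : ℤ) : ℝ) - 1 := by
        rw [hk]; push_cast; ring
      push_cast at h1 ⊢
      linarith [h1, h2, this]
    have hbin : (1 - ε/2 : ℝ) ^ N
        = ∑ i ∈ Finset.range (N+1), (ε/2) ^ i * (1 - ε) ^ (N - i) * (N.choose i : ℝ) := by
      have he : (1 - ε/2 : ℝ) = ε/2 + (1 - ε) := by ring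
      rw [he, add_pow]
    have h1 : binomCdf k N ε ≤ 2 ^ m * (1 - ε / 2) ^ N := by
      unfold binomCdf
      calc ∑ i ∈ Finset.range (N + 1),
            (if (i : ℤ) ≤ k then (N.choose i : ℝ) * ε ^ i * (1 - ε) ^ (N - i) else 0)
          ≤ ∑ i ∈ Finset.range (N+1),
            2 ^ m * ((ε/2) ^ i * (1 - ε) ^ (N - i) * (N.choose i : ℝ)) := by
            apply Finset.sum_le_sum
            intro i _
            split_ifs with h
            · have him : i ≤ m := by omega
              have hei : (ε:ℝ)^i = 2^i * (ε/2)^i := by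
                rw [← mul_pow]; congr 1; ring
              have h2i : (2:ℝ)^i ≤ 2^m := pow_le_pow_right₀ one_le_two him
              have hnn : (0:ℝ) ≤ (ε/2)^i * (1-ε)^(N-i) * (N.choose i : ℝ) := by
                have h1e : (0:ℝ) ≤ 1 - ε := by linarith
                have h2e : (0:ℝ) ≤ ε/2 := by linarith
                exact mul_nonneg (mul_nonneg (pow_nonneg h2e _) (pow_nonneg h1e _)) (Nat.cast_nonneg _)
              calc (N.choose i : ℝ) * ε ^ i * (1 - ε) ^ (N - i)
                  = 2^i * ((ε/2)^i * (1-ε)^(N-i) * (N.choose i : ℝ)) := by rw [hei]; ring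
                _ ≤ 2^m * ((ε/2)^i * (1-ε)^(N-i) * (N.choose i : ℝ)) :=
                    mul_le_mul_of_nonneg_right h2i hnn
            · have h1e : (0:ℝ) ≤ 1 - ε := by linarith
              have h2e : (0:ℝ) ≤ ε/2 := by linarith
              exact mul_nonneg (by positivity)
                (mul_nonneg (mul_nonneg (pow_nonneg h2e _) (pow_nonneg h1e _)) (Nat.cast_nonneg _))
        _ = 2 ^ m * (1 - ε / 2) ^ N := by rw [← Finset.mul_sum, hbin]
    have h2 : (2:ℝ) ^ m * (1 - ε/2) ^ N ≤ δ := by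
      have hε2 : (0:ℝ) < 1 - ε/2 := by linarith
      have hA : (0:ℝ) < 2 ^ m * (1 - ε/2) ^ N := by positivity
      rw [← Real.exp_log hA, ← Real.exp_log hδ0]
      apply Real.exp_le_exp.mpr
      rw [Real.log_mul (by positivity) (by positivity), Real.log_pow, Real.log_pow]
      have hlog2 : Real.log 2 < 0.6931471808 := Real.log_two_lt_d9
      have hlog2pos : (0:ℝ) < Real.log 2 := Real.log_pos one_lt_two
      have hl : Real.log (1 - ε/2) ≤ -(ε/2) := by
        have := Real.log_le_sub_one_of_pos hε2
        linarith
      have hld : 0 < -Real.log δ := by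
        have := Real.log_neg hδ0 hδ1
        linarith
      have hεN : 7.47 * (-Real.log δ) ≤ ε * N := by
        have hrw : Real.log (1/δ) = -Real.log δ := by rw [one_div, Real.log_inv]
        rw [hrw] at hN
        have h := mul_le_mul_of_nonneg_left hN (le_of_lt hε0)
        have heq : ε * (7.47/ε * -Real.log δ) = 7.47 * -Real.log δ := by
          field_simp
        linarith [h, heq.symm.le, heq.le]
      have hmlog : (m:ℝ) * Real.log 2 ≤ (ε * N / 2) * Real.log 2 :=
        mul_le_mul_of_nonneg_right hmle (le_of_lt hlog2pos)
      have hNl : (N:ℝ) * Real.log (1 - ε/2) ≤ (N:ℝ) * (-(ε/2)) :=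
        mul_le_mul_of_nonneg_left hl (Nat.cast_nonneg N)
      nlinarith [mul_le_mul_of_nonneg_left hlog2.le hNnn, hεN, hld, hmlog, hNl]
    linarith
end

section
/- Given ε ∈ (0,1) and δ ∈ (0,1), suppose the integer N satisfies N ≥ ((1+√3)²/ε) · ln(1/δ), and let r = ⌊εN/2⌋. Then B(r−1; N, ε) ≤ δ. -/
theorem stmt3 (ε δ : ℝ) (hε : ε ∈ Set.Ioo (0 : ℝ) 1) (hδ : δ ∈ Set.Ioo (0 : ℝ) 1)
    (N : ℕ) (hN : (1 + Real.sqrt 3) ^ 2 / ε * Real.log (1 / δ) ≤ (N : ℝ)) :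
    binomCdf (⌊ε * (N : ℝ) / 2⌋ - 1) N ε ≤ δ := by
  obtain ⟨hε0, hε1⟩ := hε
  obtain ⟨hδ0, hδ1⟩ := hδ
  set x : ℝ := ε * (N : ℝ) / 2 with hx
  have hx0 : 0 ≤ x := by positivity
  by_cases hr : ⌊x⌋ ≤ 0
  · have : binomCdf (⌊x⌋ - 1) N ε = 0 := by
      unfold binomCdf
      apply Finset.sum_eq_zero
      intro i _
      have : ¬ ((i : ℤ) ≤ ⌊x⌋ - 1) := by omega
      simp [this]
    rw [this]; linarith
  push_neg at hr
  set k : ℕ := (⌊x⌋).toNat with hk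
  have hkx : (k : ℝ) ≤ x := by
    have : ((⌊x⌋).toNat : ℤ) = ⌊x⌋ := Int.toNat_of_nonneg (by omega)
    calc (k : ℝ) = ((⌊x⌋ : ℤ) : ℝ) := by exact_mod_cast congrArg Int.cast this
    _ ≤ x := Int.floor_le x
  -- Step 1: binomCdf ≤ 2^k * (1 - ε/2)^N
  have step1 : binomCdf (⌊x⌋ - 1) N ε ≤ (2:ℝ)^k * (1 - ε/2)^N := by
    have hsum : (2:ℝ)^k * (1 - ε/2)^N
        = ∑ i ∈ Finset.range (N + 1),
          (2:ℝ)^k * ((N.choose i : ℝ) * (ε/2) ^ i * (1 - ε) ^ (N - i)) := by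
      rw [← Finset.mul_sum]
      congr 1
      have : (1 - ε/2 : ℝ) = (ε/2) + (1 - ε) := by ring
      rw [this, add_pow]
      apply Finset.sum_congr rfl
      intro i _
      ring
    rw [hsum]
    unfold binomCdf
    apply Finset.sum_le_sum
    intro i _
    by_cases h : (i : ℤ) ≤ ⌊x⌋ - 1
    · simp only [h, if_true]
      have hik : i ≤ k := by
        have : (i : ℤ) ≤ (k : ℤ) := by omega
        exact_mod_cast this
      have h2 : (2:ℝ)^i ≤ (2:ℝ)^k := pow_le_pow_right₀ one_le_two hik
      have hεi : ε ^ i = 2^i * (ε/2)^i := by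
        rw [← mul_pow]; ring_nf
      rw [hεi]
      have hT : (0:ℝ) ≤ (N.choose i : ℝ) * (ε/2) ^ i * (1 - ε) ^ (N - i) :=
        mul_nonneg (mul_nonneg (Nat.cast_nonneg _) (pow_nonneg (by positivity) _))
          (pow_nonneg (by linarith) _)
      calc (N.choose i : ℝ) * (2^i * (ε/2)^i) * (1 - ε) ^ (N - i)
          = 2^i * ((N.choose i : ℝ) * (ε/2) ^ i * (1 - ε) ^ (N - i)) := by ring
        _ ≤ 2^k * ((N.choose i : ℝ) * (ε/2) ^ i * (1 - ε) ^ (N - i)) :=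
            mul_le_mul_of_nonneg_right h2 hT
    · simp only [h, if_false]
      exact mul_nonneg (by positivity) (mul_nonneg (mul_nonneg (Nat.cast_nonneg _)
        (by positivity)) (pow_nonneg (by linarith) _))
  -- Step 2: 2^k * (1 - ε/2)^N ≤ exp(x * log 2 - ε*N/2)
  have step2 : (2:ℝ)^k * (1 - ε/2)^N ≤ Real.exp (x * Real.log 2 - ε * N / 2) := by
    have h2k : (2:ℝ)^k ≤ Real.exp (x * Real.log 2) := by
      have : (2:ℝ)^k = Real.exp ((k:ℝ) * Real.log 2) := by
        rw [← Real.exp_log (by norm_num : (0:ℝ) < 2), ← Real.exp_nat_mul]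
        norm_num
      rw [this]
      apply Real.exp_le_exp.2
      have hlog2 : (0:ℝ) ≤ Real.log 2 := Real.log_nonneg one_le_two
      exact mul_le_mul_of_nonneg_right hkx hlog2
    have hbase : (1 - ε/2 : ℝ) ≤ Real.exp (-(ε/2)) := by
      have := Real.add_one_le_exp (-(ε/2))
      linarith
    have hbase0 : (0:ℝ) ≤ 1 - ε/2 := by linarith
    have hN' : (1 - ε/2)^N ≤ Real.exp (-(ε/2))^N := pow_le_pow_left₀ hbase0 hbase N
    have : Real.exp (-(ε/2))^N = Real.exp (-(ε * N / 2)) := by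
      rw [← Real.exp_nat_mul]; ring_nf
    rw [this] at hN'
    calc (2:ℝ)^k * (1 - ε/2)^N ≤ Real.exp (x * Real.log 2) * Real.exp (-(ε * N / 2)) := by
          apply mul_le_mul h2k hN' (by positivity) (Real.exp_pos _).le
      _ = Real.exp (x * Real.log 2 - ε * N / 2) := by rw [← Real.exp_add]; ring_nf
  -- Step 3: exp(...) ≤ δ
  have step3 : Real.exp (x * Real.log 2 - ε * N / 2) ≤ δ := by
    rw [← Real.exp_log hδ0]
    apply Real.exp_le_exp.2
    set L : ℝ := Real.log (1/δ) with hL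
    have hLδ : L = - Real.log δ := by rw [hL, one_div, Real.log_inv]
    have hL0 : 0 < L := by
      rw [hL]
      apply Real.log_pos
      rw [lt_div_iff₀ hδ0]
      linarith
    have hεN : (1 + Real.sqrt 3)^2 * L ≤ ε * N := by
      have := mul_le_mul_of_nonneg_right hN hε0.le
      calc (1 + Real.sqrt 3)^2 * L = (1 + Real.sqrt 3)^2 / ε * L * ε := by
            field_simp
        _ ≤ (N:ℝ) * ε := this
        _ = ε * N := by ring
    have hS : Real.sqrt 3 ^ 2 = 3 := Real.sq_sqrt (by norm_num)
    have hS1 : (1.732 : ℝ) ≤ Real.sqrt 3 := by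
      nlinarith [Real.sqrt_nonneg 3, hS]
    have hlog2 : Real.log 2 < 0.6931471808 := Real.log_two_lt_d9
    have hlog2' : 0 ≤ Real.log 2 := Real.log_nonneg one_le_two
    rw [hx]
    nlinarith [mul_le_mul_of_nonneg_right hεN (by linarith : (0:ℝ) ≤ 1 - Real.log 2),
      mul_pos hL0 (by linarith : (0:ℝ) < 1 - Real.log 2)]
  linarith [step1, step2, step3]
end

section
/- Given ε ∈ (0,1), δ ∈ (0,1), and an integer r ≥ 1, if the integer N ≥ r satisfies ε·N ≥ (r−1) + ln(1/δ) + √(2(r−1)·ln(1/δ)), then B(r−1; N, ε) ≤ δ. -/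
theorem pow_mul_binomCdf_le {ε y : ℝ} (hε₀ : 0 ≤ ε) (hε₁ : ε ≤ 1) (hy₀ : 0 ≤ y) (hy₁ : y ≤ 1)
    (k N : ℕ) : y ^ k * binomCdf k N ε ≤ (ε * y + (1 - ε)) ^ N := by
  have h1ε : 0 ≤ 1 - ε := by linarith
  rw [binomCdf, add_pow, Finset.mul_sum]
  refine Finset.sum_le_sum fun i _ => ?_
  split_ifs with hik
  · have hyk : y ^ k ≤ y ^ i := pow_le_pow_of_le_one hy₀ hy₁ (by exact_mod_cast hik)
    have hterm : 0 ≤ (N.choose i : ℝ) * ε ^ i * (1 - ε) ^ (N - i) := by positivity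
    calc y ^ k * ((N.choose i : ℝ) * ε ^ i * (1 - ε) ^ (N - i))
        ≤ y ^ i * ((N.choose i : ℝ) * ε ^ i * (1 - ε) ^ (N - i)) :=
          mul_le_mul_of_nonneg_right hyk hterm
      _ = (ε * y) ^ i * (1 - ε) ^ (N - i) * N.choose i := by ring
  · rw [mul_zero]
    positivity

theorem binomCdf_le_pow_mul_exp {ε : ℝ} (hε₀ : 0 ≤ ε) (hε₁ : ε ≤ 1) {k N : ℕ}
    (hk : (k : ℝ) ≤ ε * N) : binomCdf k N ε ≤ (ε * N / k) ^ k * Real.exp (k - ε * N) := by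
  set m := ε * N
  have hm : 0 ≤ m := by positivity
  -- the optimal choice of the Chernoff parameter
  set y := (k : ℝ) / m
  have hy₀ : 0 ≤ y := by positivity
  have hy₁ : y ≤ 1 := div_le_one_of_le₀ hk hm
  have hym : y * m = k := by
    refine div_mul_cancel_of_imp fun hm0 => ?_
    linarith [k.cast_nonneg (α := ℝ)]
  have hbase : (ε * y + (1 - ε)) ^ N ≤ Real.exp (k - m) := by
    have : 0 ≤ ε * y + (1 - ε) := by nlinarith [mul_nonneg hε₀ hy₀]
    calc (ε * y + (1 - ε)) ^ N ≤ Real.exp (-(ε * (1 - y))) ^ N := by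
          refine pow_le_pow_left₀ this ?_ N
          linarith [Real.one_sub_le_exp_neg (ε * (1 - y))]
      _ = Real.exp (k - m) := by
          rw [← Real.exp_nat_mul]
          congr 1
          linear_combination hym
  have hcancel : (m / k) ^ k * y ^ k = 1 := by
    rcases Nat.eq_zero_or_pos k with rfl | hk₀
    · simp
    have : (0 : ℝ) < k := by exact_mod_cast hk₀
    rw [← mul_pow, div_mul_eq_mul_div, mul_comm m y, hym, div_self this.ne', one_pow]
  calc binomCdf k N ε = (m / k) ^ k * (y ^ k * binomCdf k N ε) := by
        rw [← mul_assoc, hcancel, one_mul]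
    _ ≤ (m / k) ^ k * Real.exp (k - m) := by
        gcongr
        exact (pow_mul_binomCdf_le hε₀ hε₁ hy₀ hy₁ k N).trans hbase

theorem mul_log_div_le_of_add_add_sqrt_le {k L m : ℝ} (hk : 0 < k) (hL : 0 ≤ L)
    (hm : k + L + √(2 * k * L) ≤ m) : k * Real.log (m / k) ≤ m - k - L := by
  set s := √(2 * k * L)
  have hs : 0 ≤ s := Real.sqrt_nonneg _
  have hs2 : s ^ 2 = 2 * k * L := Real.sq_sqrt (by positivity)
  -- at `m = m₀ = k (1 + t + t²/2)`, `t = s / k`, the claim is `log (1 + t + t²/2) ≤ t`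
  set m₀ := k + L + s
  have hm₀ : 0 < m₀ := by positivity
  have hkm₀ : k ≤ m₀ := by linarith
  have hlog_m₀ : k * (Real.log m₀ - Real.log k) ≤ s := by
    have hm₀k : m₀ / k = 1 + s / k + (s / k) ^ 2 / 2 := by
      field_simp
      linear_combination -hs2
    have : Real.log (m₀ / k) ≤ s / k := by
      rw [Real.log_le_iff_le_exp (by positivity), hm₀k]
      exact Real.quadratic_le_exp_of_nonneg (by positivity)
    rw [Real.log_div hm₀.ne' hk.ne', le_div_iff₀ hk] at this
    linarith
  have hlog_m : k * (Real.log m - Real.log m₀) ≤ m - m₀ := by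
    rw [← Real.log_div (by linarith) hm₀.ne']
    calc k * Real.log (m / m₀) ≤ m₀ * Real.log (m / m₀) :=
          mul_le_mul_of_nonneg_right hkm₀ (Real.log_nonneg ((one_le_div hm₀).2 hm))
      _ ≤ m₀ * (m / m₀ - 1) :=
          mul_le_mul_of_nonneg_left (Real.log_le_sub_one_of_pos (div_pos (by linarith) hm₀)) hm₀.le
      _ = m - m₀ := by field_simp
  rw [Real.log_div (by linarith) hk.ne']
  linarith

theorem div_pow_mul_exp_sub_le {k : ℕ} {L m : ℝ} (hL : 0 ≤ L) (hm : k + L + √(2 * k * L) ≤ m) :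
    (m / k) ^ k * Real.exp (k - m) ≤ Real.exp (-L) := by
  rcases Nat.eq_zero_or_pos k with rfl | hk
  · simpa using hm
  have hk' : (0 : ℝ) < k := by exact_mod_cast hk
  have hmk : 0 < m / k := div_pos (by linarith [Real.sqrt_nonneg (2 * k * L)]) hk'
  rw [← Real.exp_log hmk, ← Real.exp_nat_mul, ← Real.exp_add, Real.exp_le_exp]
  linarith [mul_log_div_le_of_add_add_sqrt_le hk' hL hm]

theorem stmt4_general (ε δ : ℝ) (hε : ε ∈ Set.Ioo (0 : ℝ) 1) (hδ : δ ∈ Set.Ioo (0 : ℝ) 1)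
    (r N : ℕ) (hr : 1 ≤ r)
    (hN : ((r : ℝ) - 1) + Real.log (1 / δ) +
        Real.sqrt (2 * ((r : ℝ) - 1) * Real.log (1 / δ)) ≤ ε * (N : ℝ)) :
    binomCdf ((r : ℤ) - 1) N ε ≤ δ := by
  obtain ⟨k, rfl⟩ := Nat.exists_eq_add_of_le' hr
  set L := Real.log (1 / δ)
  have hL : 0 ≤ L := Real.log_nonneg ((one_le_div hδ.1).2 hδ.2.le)
  have hk : (k : ℝ) + L + √(2 * k * L) ≤ ε * N := by simpa using hN
  have hkm : (k : ℝ) ≤ ε * N := by linarith [Real.sqrt_nonneg (2 * k * L)]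
  calc binomCdf (((k + 1 : ℕ) : ℤ) - 1) N ε = binomCdf k N ε := by push_cast; ring_nf
    _ ≤ (ε * N / k) ^ k * Real.exp (k - ε * N) := binomCdf_le_pow_mul_exp hε.1.le hε.2.le hkm
    _ ≤ Real.exp (-L) := div_pow_mul_exp_sub_le hL hk
    _ = δ := by simp [L, Real.exp_log hδ.1]

theorem stmt4 (ε δ : ℝ) (hε : ε ∈ Set.Ioo (0 : ℝ) 1) (hδ : δ ∈ Set.Ioo (0 : ℝ) 1)
    (r N : ℕ) (hr : 1 ≤ r) (hrN : r ≤ N)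
    (hN : ((r : ℝ) - 1) + Real.log (1 / δ) +
        Real.sqrt (2 * ((r : ℝ) - 1) * Real.log (1 / δ)) ≤ ε * (N : ℝ)) :
    binomCdf ((r : ℤ) - 1) N ε ≤ δ :=
  stmt4_general ε δ hε hδ r N hr hN
end

section
/- Let μ be a probability measure on ℝ, let ε ∈ (0,1) and δ ∈ (0,1), and let the integer N satisfy N ≥ (1/ε) · ln(1/δ). If q₁, …, q_N are drawn i.i.d. from μ, then with probability no smaller than 1−δ over the multisample drawn from the product measure μ^N, the largest sampled value q₁⁺ = max_{i∈{1,…,N}} q_i satisfies μ{ q ∈ ℝ : q > q₁⁺ } ≤ ε. -/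
open MeasureTheory

theorem stmt5 (μ : Measure ℝ) [IsProbabilityMeasure μ]
    (ε δ : ℝ) (hε : ε ∈ Set.Ioo (0 : ℝ) 1) (hδ : δ ∈ Set.Ioo (0 : ℝ) 1)
    (N : ℕ) (hN : 1 / ε * Real.log (1 / δ) ≤ (N : ℝ)) :
    ENNReal.ofReal (1 - δ) ≤
      (Measure.pi fun _ : Fin N => μ)
        {q : Fin N → ℝ | μ {x : ℝ | (⨆ i, q i) < x} ≤ ENNReal.ofReal ε} := by
  obtain ⟨hε0, hε1⟩ := hε
  obtain ⟨hδ0, hδ1⟩ := hδ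
  set S : Set ℝ := {s : ℝ | μ (Set.Ioi s) ≤ ENNReal.ofReal ε} with hSdef
  have hSne : S.Nonempty := by
    have hinter : ⋂ n : ℕ, Set.Ioi (n : ℝ) = ∅ := by
      ext x
      simp only [Set.mem_iInter, Set.mem_Ioi, Set.mem_empty_iff_false, iff_false, not_forall,
        not_lt]
      obtain ⟨n, hn⟩ := exists_nat_ge x
      exact ⟨n, hn⟩
    have ht : Filter.Tendsto (fun n : ℕ => μ (Set.Ioi (n : ℝ))) Filter.atTop (nhds 0) := by
      have h := tendsto_measure_iInter_atTop (μ := μ) (s := fun n : ℕ => Set.Ioi (n : ℝ))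
        (fun _ => measurableSet_Ioi.nullMeasurableSet)
        (fun a b hab => Set.Ioi_subset_Ioi (by exact_mod_cast hab))
        ⟨0, measure_ne_top μ _⟩
      rwa [hinter, measure_empty] at h
    obtain ⟨n, hn⟩ :=
      (ht.eventually_lt_const (show (0 : ENNReal) < ENNReal.ofReal ε from ENNReal.ofReal_pos.2 hε0)).exists
    exact ⟨n, hn.le⟩
  have hSbdd : BddBelow S := by
    have hunion : ⋃ n : ℕ, Set.Ioi (-(n : ℝ)) = Set.univ := by
      ext x
      simp only [Set.mem_iUnion, Set.mem_Ioi, Set.mem_univ, iff_true]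
      obtain ⟨n, hn⟩ := exists_nat_gt (-x)
      exact ⟨n, by linarith⟩
    have ht : Filter.Tendsto (fun n : ℕ => μ (Set.Ioi (-(n : ℝ)))) Filter.atTop (nhds 1) := by
      have h := tendsto_measure_iUnion_atTop (μ := μ) (s := fun n : ℕ => Set.Ioi (-(n : ℝ)))
        (fun a b hab => Set.Ioi_subset_Ioi (by simp only [neg_le_neg_iff]; exact_mod_cast hab))
      rwa [hunion, measure_univ] at h
    have hlt : ENNReal.ofReal ε < 1 := by
      rw [← ENNReal.ofReal_one]
      exact (ENNReal.ofReal_lt_ofReal_iff_of_nonneg hε0.le).2 hε1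
    obtain ⟨n, hn⟩ := (ht.eventually_const_lt hlt).exists
    refine ⟨-(n : ℝ), fun s hs => ?_⟩
    by_contra h
    push_neg at h
    exact absurd (le_trans (measure_mono (Set.Ioi_subset_Ioi h.le)) hs) hn.not_ge
  set t := sInf S with htdef
  have htail : μ (Set.Ioi t) ≤ ENNReal.ofReal ε := by
    have hU : Set.Ioi t = ⋃ n : ℕ, Set.Ioi (t + 1 / ((n : ℝ) + 1)) := by
      ext x
      simp only [Set.mem_Ioi, Set.mem_iUnion]
      constructor
      · intro hx
        obtain ⟨n, hn⟩ := exists_nat_one_div_lt (sub_pos.2 hx)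
        exact ⟨n, by push_cast at hn ⊢; linarith⟩
      · rintro ⟨n, hn⟩
        have h0 : 0 < 1 / ((n : ℝ) + 1) := by positivity
        linarith
    have hmono : Monotone fun n : ℕ => Set.Ioi (t + 1 / ((n : ℝ) + 1)) := by
      intro a b hab
      apply Set.Ioi_subset_Ioi
      have hc : (a : ℝ) + 1 ≤ (b : ℝ) + 1 := by exact_mod_cast Nat.succ_le_succ hab
      have := one_div_le_one_div_of_le (by positivity : (0:ℝ) < (a : ℝ) + 1) hc
      linarith
    rw [hU, hmono.measure_iUnion]
    apply iSup_le
    intro n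
    have hlt : t < t + 1 / ((n : ℝ) + 1) := by
      have h0 : 0 < 1 / ((n : ℝ) + 1) := by positivity
      linarith
    obtain ⟨s, hsS, hslt⟩ := (csInf_lt_iff hSbdd hSne).1 hlt
    exact le_trans (measure_mono (Set.Ioi_subset_Ioi hslt.le)) hsS
  have hlow : μ (Set.Iio t) ≤ ENNReal.ofReal (1 - ε) := by
    have hU : Set.Iio t = ⋃ n : ℕ, Set.Iic (t - 1 / ((n : ℝ) + 1)) := by
      ext x
      simp only [Set.mem_Iio, Set.mem_iUnion, Set.mem_Iic]
      constructor
      · intro hx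
        obtain ⟨n, hn⟩ := exists_nat_one_div_lt (sub_pos.2 hx)
        exact ⟨n, by push_cast at hn ⊢; linarith⟩
      · rintro ⟨n, hn⟩
        have h0 : 0 < 1 / ((n : ℝ) + 1) := by positivity
        linarith
    have hmono : Monotone fun n : ℕ => Set.Iic (t - 1 / ((n : ℝ) + 1)) := by
      intro a b hab
      apply Set.Iic_subset_Iic.2
      have hc : (a : ℝ) + 1 ≤ (b : ℝ) + 1 := by exact_mod_cast Nat.succ_le_succ hab
      have := one_div_le_one_div_of_le (by positivity : (0:ℝ) < (a : ℝ) + 1) hc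
      linarith
    rw [hU, hmono.measure_iUnion]
    apply iSup_le
    intro n
    have hnS : t - 1 / ((n : ℝ) + 1) ∉ S := by
      intro h
      have h0 : 0 < 1 / ((n : ℝ) + 1) := by positivity
      have := csInf_le hSbdd h
      rw [← htdef] at this
      linarith
    have hgt : ENNReal.ofReal ε ≤ μ (Set.Ioi (t - 1 / ((n : ℝ) + 1))) :=
      (not_le.1 hnS).le
    have hcompl : Set.Iic (t - 1 / ((n : ℝ) + 1)) = (Set.Ioi (t - 1 / ((n : ℝ) + 1)))ᶜ := by
      simp
    rw [hcompl, prob_compl_eq_one_sub measurableSet_Ioi]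
    rw [ENNReal.ofReal_sub _ hε0.le, ENNReal.ofReal_one]
    exact tsub_le_tsub_left hgt 1
  -- the "bad" set: all samples below t
  set Bad : Set (Fin N → ℝ) := Set.univ.pi (fun _ => Set.Iio t) with hBaddef
  have hBadm : MeasurableSet Bad := MeasurableSet.univ_pi fun _ => measurableSet_Iio
  have hBadμ : (Measure.pi fun _ : Fin N => μ) Bad = μ (Set.Iio t) ^ N := by
    rw [hBaddef, Measure.pi_pi]
    simp [Finset.prod_const]
  have hsub : Badᶜ ⊆
      {q : Fin N → ℝ | μ {x : ℝ | (⨆ i, q i) < x} ≤ ENNReal.ofReal ε} := by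
    intro q hq
    simp only [hBaddef, Set.mem_compl_iff, Set.mem_pi, Set.mem_univ, Set.mem_Iio, true_implies,
      not_forall, not_lt] at hq
    obtain ⟨i, hi⟩ := hq
    have hts : t ≤ ⨆ j, q j :=
      hi.trans (le_ciSup (Set.Finite.bddAbove (Set.finite_range q)) i)
    refine le_trans (measure_mono ?_) htail
    intro x hx
    exact lt_of_le_of_lt hts hx
  refine le_trans ?_ (measure_mono hsub)
  rw [prob_compl_eq_one_sub hBadm, hBadμ]
  have hδ' : ENNReal.ofReal (1 - δ) = 1 - ENNReal.ofReal δ := by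
    rw [ENNReal.ofReal_sub _ hδ0.le, ENNReal.ofReal_one]
  rw [hδ']
  refine tsub_le_tsub_left ?_ 1
  -- numeric bound : μ(Iio t)^N ≤ ofReal ((1-ε)^N) ≤ ofReal δ
  have hlog : Real.log (1 / δ) ≤ ε * N := by
    have h := mul_le_mul_of_nonneg_left hN hε0.le
    rwa [← mul_assoc, mul_one_div, div_self hε0.ne', one_mul] at h
  have hpow : (1 - ε) ^ N ≤ δ := by
    have h1 : (1 - ε) ^ N ≤ Real.exp (-ε) ^ N := by
      apply pow_le_pow_left₀ (by linarith)
      linarith [Real.add_one_le_exp (-ε)]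
    have h2 : Real.exp (-ε) ^ N = Real.exp (-(ε * N)) := by
      rw [← Real.exp_nat_mul]
      ring_nf
    have h3 : Real.exp (-(ε * N)) ≤ δ := by
      rw [← Real.exp_log hδ0]
      apply Real.exp_le_exp.2
      have hld : Real.log (1 / δ) = -Real.log δ := by rw [one_div, Real.log_inv]
      linarith
    calc (1 - ε) ^ N ≤ Real.exp (-ε) ^ N := h1
      _ = Real.exp (-(ε * N)) := h2
      _ ≤ δ := h3
  calc μ (Set.Iio t) ^ N ≤ ENNReal.ofReal (1 - ε) ^ N := by gcongr
    _ = ENNReal.ofReal ((1 - ε) ^ N) := (ENNReal.ofReal_pow (by linarith) N).symm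
    _ ≤ ENNReal.ofReal δ := ENNReal.ofReal_le_ofReal hpow
end

section
/- (Corollary 2) Let μ be a probability measure on ℝ^{n_x} × ℝ, let T : ℝ^{n_x} → ℝ be a measurable predictor, and let σ̂ : ℝ^{n_x} → (0,∞) be a measurable strictly positive function. Let ε ∈ (0,1), δ ∈ (0,1), let the integer N satisfy N ≥ (7.47/ε) · ln(1/δ), and set r = ⌊εN/2⌋, assuming r ≥ 1. If (x₁,y₁), …, (x_N,y_N) are drawn i.i.d. from μ and γ_i = |y_i − T(x_i)| / σ̂(x_i) for i = 1,…,N, then the value γ̄ = rmax_r{γ_i}_{i=1}^N satisfies, with probability no smaller than 1−δ over the multisample drawn from the product measure μ^N, μ{ (x,y) : |y − T(x)| > γ̄ · σ̂(x) } ≤ ε. -/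
/-!
Write `γ` for the normalized residual `|y - T x| / σ̂ x`. From the upper `ε`-quantile of `γ` one
gets a measurable set `A` with `μ A ≥ ε` that lies inside `{γ > c}` for every level `c` with
`μ {γ > c} > ε`. If the level `γ̄ = rmax_r` were such a `c`, every sample in `A` would exceed
`γ̄`; but at most `r - 1` samples exceed their `r`-th largest value, so fewer than `r` samples
fall in `A`. By Markov's inequality applied to `2 ^ (-#{i | w i ∈ A})`, whose mean is
`(1 - μ A / 2) ^ N`, this happens with probability at most
`2 ^ (r - 1) (1 - ε / 2) ^ N ≤ exp (-(1 - log 2) ε N / 2) ≤ δ`.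
-/

open MeasureTheory

open Finset ProbabilityTheory
open scoped ENNReal Classical

lemma card_filter_univ_eq_countP_ofFn {α : Type*} {N : ℕ} (q : Fin N → α) (p : α → Prop) :
    #{i | p (q i)} = (List.ofFn q).countP (fun x => decide (p x)) := by
  rw [← Multiset.coe_countP, ← Fin.univ_val_map, Multiset.countP_map, Finset.card_def]
  rfl

lemma countP_lt_getElem_le_of_pairwise {α : Type*} [LinearOrder α] {l : List α}
    (hl : l.Pairwise (· ≤ ·)) {m : ℕ} (hm : m < l.length) :
    l.countP (fun x => decide (l[m] < x)) ≤ l.length - (m + 1) := by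
  have htake : ∀ x ∈ l.take (m + 1), ¬ l[m] < x := fun x hx => by
    obtain ⟨j, hj, rfl⟩ := List.mem_take_iff_getElem.1 hx
    exact not_lt.2 <|
      hl.rel_get_of_le (a := ⟨j, by omega⟩) (b := ⟨m, hm⟩) (Fin.mk_le_mk.2 (by omega))
  generalize l[m] = c at htake ⊢
  rw [← List.take_append_drop (m + 1) l, List.countP_append,
    List.countP_eq_zero.2 (by simpa using htake)]
  simpa using List.countP_le_length (l := l.drop (m + 1))

lemma card_lt_rmax_lt {N r : ℕ} (q : Fin N → ℝ) (hr : 1 ≤ r) : #{i | rmax r q < q i} < r := by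
  set l := (List.ofFn q).insertionSort (· ≤ ·)
  have hperm : l.Perm (List.ofFn q) := List.perm_insertionSort _ _
  have hsort : l.Pairwise (· ≤ ·) := List.pairwise_insertionSort _ _
  have hlen : l.length = N := by rw [hperm.length_eq, List.length_ofFn]
  rcases Nat.eq_zero_or_pos N with rfl | hN
  · simp only [univ_eq_empty, filter_empty, card_empty]
    omega
  have hm : N - r < l.length := by omega
  have hc : rmax r q = l[N - r] := List.getD_eq_getElem _ _ hm
  rw [card_filter_univ_eq_countP_ofFn q (rmax r q < ·), ← hperm.countP_eq, hc]
  have := countP_lt_getElem_le_of_pairwise hsort hm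
  omega

lemma two_pow_mul_one_sub_half_pow_le {ε δ : ℝ} {N r : ℕ} (hε0 : 0 < ε) (hε2 : ε ≤ 2)
    (hδ0 : 0 < δ) (hδ1 : δ ≤ 1) (hN : 7.47 / ε * Real.log (1 / δ) ≤ N)
    (hr : (r : ℝ) ≤ ε * N / 2) :
    2 ^ (r - 1) * (1 - ε / 2) ^ N ≤ δ := by
  rw [one_div, Real.log_inv, div_mul_eq_mul_div, div_le_iff₀ hε0] at hN
  have hlogδ : Real.log δ ≤ 0 := Real.log_nonpos hδ0.le hδ1
  have hpow2 : (2 : ℝ) ^ (r - 1) ≤ Real.exp (ε * N / 2 * Real.log 2) := by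
    calc (2 : ℝ) ^ (r - 1) = Real.exp ((r - 1 : ℕ) * Real.log 2) := by
          rw [Real.exp_nat_mul, Real.exp_log two_pos]
      _ ≤ Real.exp (ε * N / 2 * Real.log 2) := by
          gcongr
          exact (Nat.cast_le.2 (r.sub_le 1)).trans hr
  have hpow : (1 - ε / 2) ^ N ≤ Real.exp (-(ε * N / 2)) := by
    calc (1 - ε / 2) ^ N ≤ Real.exp (-(ε / 2)) ^ N := by
          gcongr
          · linarith
          · linarith [Real.add_one_le_exp (-(ε / 2))]
      _ = Real.exp (-(ε * N / 2)) := by rw [← Real.exp_nat_mul]; ring_nf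
  have hlog2 := Real.log_two_lt_d9
  -- the constant `7.47` is what makes `7.47 * (1 - log 2) / 2 ≥ 1`
  calc 2 ^ (r - 1) * (1 - ε / 2) ^ N
      ≤ Real.exp (ε * N / 2 * Real.log 2) * Real.exp (-(ε * N / 2)) := by
        gcongr
        exact pow_nonneg (by linarith) N
    _ ≤ Real.exp (Real.log δ) := by
        rw [← Real.exp_add, Real.exp_le_exp]
        nlinarith [mul_le_mul_of_nonneg_left hN (by linarith : (0 : ℝ) ≤ 1 - Real.log 2)]
    _ = δ := Real.exp_log hδ0

section Quantile

variable {Ω : Type*} [MeasurableSpace Ω] {μ : Measure Ω} [IsFiniteMeasure μ] {f : Ω → ℝ}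

lemma le_measure_iInter_setOf_lt (hf : Measurable f) {ε : ℝ≥0∞} {c : ℕ → ℝ} (hc : Monotone c)
    (h : ∀ n, ε ≤ μ {x | c n < f x}) : ε ≤ μ (⋂ n, {x | c n < f x}) := by
  rw [Antitone.measure_iInter (s := fun n => {x | c n < f x})
    (fun m n hmn x hx => (hc hmn).trans_lt hx)
    (fun n => (hf measurableSet_Ioi).nullMeasurableSet) ⟨0, measure_ne_top _ _⟩]
  exact le_iInf h

lemma exists_measurableSet_le_measure_subset_setOf_lt (hf : Measurable f) {ε : ℝ≥0∞}
    (hε0 : ε ≠ 0) (hε : ε ≤ μ Set.univ) :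
    ∃ A, MeasurableSet A ∧ ε ≤ μ A ∧ ∀ c, ε < μ {x | c < f x} → A ⊆ {x | c < f x} := by
  set B := {c | ε < μ {x | c < f x}}
  have hB_lower : ∀ ⦃c c'⦄, c' ≤ c → c ∈ B → c' ∈ B := fun c c' h hc =>
    hc.trans_le (measure_mono fun x hx => h.trans_lt hx)
  rcases B.eq_empty_or_nonempty with hB | hBne
  · exact ⟨Set.univ, .univ, hε, fun c hc => (Set.eq_empty_iff_forall_notMem.1 hB c hc).elim⟩
  have hBbdd : BddAbove B := by
    by_contra hB
    rw [not_bddAbove_iff] at hB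
    have hle := le_measure_iInter_setOf_lt (μ := μ) hf Nat.mono_cast fun n =>
      (Exists.elim (hB n) fun b ⟨hb, hnb⟩ => hB_lower hnb.le hb).le
    have hempty : ⋂ n : ℕ, {x | (n : ℝ) < f x} = ∅ :=
      Set.eq_empty_of_forall_notMem fun x hx =>
        (exists_nat_ge (f x)).elim fun n hn => (Set.mem_iInter.1 hx n).not_ge hn
    rw [hempty, measure_empty] at hle
    exact hε0 (nonpos_iff_eq_zero.1 hle)
  -- `sSup B` is the upper `ε`-quantile of `f`
  by_cases hs : sSup B ∈ B
  · exact ⟨{x | sSup B < f x}, hf measurableSet_Ioi, hs.le,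
      fun c hc x hx => (le_csSup hBbdd hc).trans_lt hx⟩
  refine ⟨{x | sSup B ≤ f x}, hf measurableSet_Ici, ?_, fun c hc x hx =>
    ((le_csSup hBbdd hc).lt_of_ne fun h => hs (h ▸ hc)).trans_le hx⟩
  have hlt : ∀ t < sSup B, t ∈ B := fun t ht =>
    (exists_lt_of_lt_csSup hBne ht).elim fun b ⟨hb, htb⟩ => hB_lower htb.le hb
  have hle := le_measure_iInter_setOf_lt (μ := μ) hf (c := fun n : ℕ => sSup B - 1 / (n + 1))
    (fun m n hmn => sub_le_sub_left (Nat.one_div_le_one_div hmn) _)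
    fun n => (hlt _ (sub_lt_self _ Nat.one_div_pos_of_nat)).le
  convert hle using 2
  ext x
  simp only [Set.mem_ofPred_eq, Set.mem_iInter]
  refine ⟨fun hx n => (sub_lt_self _ Nat.one_div_pos_of_nat).trans_le hx, fun hx => ?_⟩
  by_contra! hlt
  obtain ⟨n, hn⟩ := exists_nat_one_div_lt (sub_pos.2 hlt)
  linarith [hx n]

end Quantile

lemma prod_one_sub_indicator_half {Ω ι : Type*} [Fintype ι] (A : Set Ω) (w : ι → Ω) :
    ∏ i, (1 - A.indicator (fun _ => (2⁻¹ : ℝ≥0∞)) (w i)) = 2⁻¹ ^ #{i | w i ∈ A} := by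
  have h (x : Ω) : 1 - A.indicator (fun _ => (2⁻¹ : ℝ≥0∞)) x = if x ∈ A then 2⁻¹ else 1 := by
    by_cases hx : x ∈ A <;> simp [hx, ENNReal.one_sub_inv_two]
  simp_rw [h]
  rw [Finset.prod_ite, prod_const, prod_const_one, mul_one]

section Binomial

variable {Ω ι : Type*} [MeasurableSpace Ω] [Fintype ι] {μ : Measure Ω} [IsProbabilityMeasure μ]
  {A : Set Ω}

lemma lintegral_one_sub_indicator_half (hA : MeasurableSet A) :
    ∫⁻ x, (1 - A.indicator (fun _ => 2⁻¹) x) ∂μ = 1 - μ A / 2 := by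
  have hle : A.indicator (fun _ => (2⁻¹ : ℝ≥0∞)) ≤ᵐ[μ] fun _ => 1 :=
    Filter.Eventually.of_forall (Set.indicator_le fun _ _ => ENNReal.inv_le_one.2 one_le_two)
  have hfin : ∫⁻ x, A.indicator (fun _ => (2⁻¹ : ℝ≥0∞)) x ∂μ ≠ ∞ := by
    rw [lintegral_indicator_const hA]
    exact ENNReal.mul_ne_top (by simp) (measure_ne_top μ A)
  rw [lintegral_sub (measurable_const.indicator hA) hfin hle, lintegral_const, measure_univ,
    one_mul, lintegral_indicator_const hA, ENNReal.div_eq_inv_mul]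

lemma measure_pi_card_mem_le_le (hA : MeasurableSet A) (k : ℕ) :
    Measure.pi (fun _ : ι => μ) {w | #{i | w i ∈ A} ≤ k} ≤
      2 ^ k * (1 - μ A / 2) ^ Fintype.card ι := by
  set F : (ι → Ω) → ℝ≥0∞ := fun w => ∏ i, (1 - A.indicator (fun _ => 2⁻¹) (w i))
  have hg : Measurable fun x => 1 - A.indicator (fun _ => (2⁻¹ : ℝ≥0∞)) x :=
    measurable_const.sub (measurable_const.indicator hA)
  have hF : ∫⁻ w, F w ∂Measure.pi (fun _ : ι => μ) = (1 - μ A / 2) ^ Fintype.card ι := by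
    rw [lintegral_prod_eq_prod_lintegral_of_indepFun _ _
      (iIndepFun_pi fun _ => hg.aemeasurable) fun i => hg.comp (measurable_pi_apply i)]
    simp_rw [(measurePreserving_eval (fun _ : ι => μ) _).lintegral_comp hg,
      lintegral_one_sub_indicator_half hA, prod_const, card_univ]
  have hsub : {w | #{i | w i ∈ A} ≤ k} ⊆ {w | 2⁻¹ ^ k ≤ F w} := fun w hw => by
    simp only [Set.mem_ofPred_eq, F, prod_one_sub_indicator_half A] at hw ⊢
    exact pow_le_pow_right_of_le_one' (by norm_num) hw
  calc Measure.pi (fun _ : ι => μ) {w | #{i | w i ∈ A} ≤ k}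
      = 2 ^ k * (2⁻¹ ^ k * Measure.pi (fun _ : ι => μ) {w | #{i | w i ∈ A} ≤ k}) := by
        rw [← mul_assoc, ← mul_pow, ENNReal.mul_inv_cancel two_ne_zero ENNReal.ofNat_ne_top,
          one_pow, one_mul]
    _ ≤ 2 ^ k * ∫⁻ w, F w ∂Measure.pi (fun _ : ι => μ) := by
        gcongr
        exact (mul_le_mul_right (measure_mono hsub) _).trans
          (mul_meas_ge_le_lintegral₀ (by fun_prop) _)
    _ = 2 ^ k * (1 - μ A / 2) ^ Fintype.card ι := by rw [hF]

end Binomial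

lemma ofReal_one_sub_le_measure_compl {α : Type*} [MeasurableSpace α] {ν : Measure α}
    [IsProbabilityMeasure ν] {s : Set α} {δ : ℝ} (hδ : 0 ≤ δ) (hs : ν s ≤ ENNReal.ofReal δ) :
    ENNReal.ofReal (1 - δ) ≤ ν sᶜ :=
  calc ENNReal.ofReal (1 - δ) = 1 - ENNReal.ofReal δ := by
        rw [ENNReal.ofReal_sub _ hδ, ENNReal.ofReal_one]
    _ ≤ 1 - ν s := by gcongr
    _ ≤ ν sᶜ := by
        rw [tsub_le_iff_left, ← measure_univ (μ := ν)]
        exact measure_univ_le_add_compl s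

theorem ofReal_one_sub_le_measure_pi_measure_rmax_lt_le {Ω : Type*} [MeasurableSpace Ω]
    (μ : Measure Ω) [IsProbabilityMeasure μ] {γ : Ω → ℝ} (hγ : Measurable γ) {ε δ : ℝ}
    (hε0 : 0 < ε) (hε1 : ε ≤ 1) (hδ0 : 0 < δ) (hδ1 : δ ≤ 1) {N r : ℕ}
    (hN : 7.47 / ε * Real.log (1 / δ) ≤ N) (hrN : (r : ℝ) ≤ ε * N / 2) (hr : 1 ≤ r) :
    ENNReal.ofReal (1 - δ) ≤ Measure.pi (fun _ : Fin N => μ)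
      {w | μ {x | rmax r (fun i => γ (w i)) < γ x} ≤ ENNReal.ofReal ε} := by
  obtain ⟨A, hA, hμA, hAsub⟩ := exists_measurableSet_le_measure_subset_setOf_lt (μ := μ) hγ
    (ENNReal.ofReal_pos.2 hε0).ne' (by simpa using hε1)
  have hgood : {w : Fin N → Ω | #{i | w i ∈ A} ≤ r - 1}ᶜ ⊆
      {w | μ {x | rmax r (fun i => γ (w i)) < γ x} ≤ ENNReal.ofReal ε} := by
    intro w hw
    simp only [Set.mem_compl_iff, Set.mem_ofPred_eq, not_le] at hw ⊢
    by_contra! hbad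
    have hA_le := card_le_card (s := {i | w i ∈ A})
      (t := {i | rmax r (fun i => γ (w i)) < γ (w i)}) fun i hi => by
        simp only [mem_filter, mem_univ, true_and] at hi ⊢
        exact hAsub _ hbad hi
    have := card_lt_rmax_lt (fun i => γ (w i)) hr
    omega
  refine (ofReal_one_sub_le_measure_compl hδ0.le ?_).trans (measure_mono hgood)
  calc _ ≤ 2 ^ (r - 1) * (1 - μ A / 2) ^ Fintype.card (Fin N) := measure_pi_card_mem_le_le hA _
    _ ≤ 2 ^ (r - 1) * (1 - ENNReal.ofReal ε / 2) ^ N := by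
        rw [Fintype.card_fin]
        gcongr
    _ = ENNReal.ofReal (2 ^ (r - 1) * (1 - ε / 2) ^ N) := by
        rw [ENNReal.ofReal_mul (by positivity), ENNReal.ofReal_pow (by linarith : 0 ≤ 1 - ε / 2),
          ENNReal.ofReal_sub _ (by linarith), ENNReal.ofReal_div_of_pos two_pos]
        simp
    _ ≤ ENNReal.ofReal δ := ENNReal.ofReal_le_ofReal
        (two_pow_mul_one_sub_half_pow_le hε0 (by linarith) hδ0 hδ1 hN hrN)

theorem stmt8 (nx : ℕ) (μ : Measure ((Fin nx → ℝ) × ℝ)) [IsProbabilityMeasure μ]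
    (T : (Fin nx → ℝ) → ℝ) (hT : Measurable T)
    (σhat : (Fin nx → ℝ) → ℝ) (hσm : Measurable σhat) (hσpos : ∀ x, 0 < σhat x)
    (ε δ : ℝ) (hε : ε ∈ Set.Ioo (0 : ℝ) 1) (hδ : δ ∈ Set.Ioo (0 : ℝ) 1)
    (N r : ℕ) (hN : 7.47 / ε * Real.log (1 / δ) ≤ (N : ℝ))
    (hrdef : (r : ℤ) = ⌊ε * (N : ℝ) / 2⌋) (hr : 1 ≤ r) :
    ENNReal.ofReal (1 - δ) ≤
      (Measure.pi fun _ : Fin N => μ)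
        {w : Fin N → (Fin nx → ℝ) × ℝ |
          μ {p : (Fin nx → ℝ) × ℝ |
              rmax r (fun i => |(w i).2 - T (w i).1| / σhat (w i).1) * σhat p.1 <
                |p.2 - T p.1|} ≤
            ENNReal.ofReal ε} := by
  have hrN : (r : ℝ) ≤ ε * N / 2 := by
    exact_mod_cast (Int.cast_le.2 hrdef.le).trans (Int.floor_le (ε * N / 2))
  simp only [← lt_div_iff₀ (hσpos _)]
  exact ofReal_one_sub_le_measure_pi_measure_rmax_lt_le μ (γ := fun p => |p.2 - T p.1| / σhat p.1)
    (by fun_prop) hε.1 hε.2.le hδ.1 hδ.2.le hN hrN hr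
end
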